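/- arXiv:2502.04673 — 2 statements merged into one kernel-verified Lean document; each statement's English description precedes it below -/
import Mathlib

section
/- The Neyman loss is asymmetric toward 1/2: if σ₀, σ₁ > 0 with π* = σ₁/(σ₀+σ₁) < 1/2, then for any ε with 0 < ε ≤ 1/2 − π* and ε < π*, we have f(π* + ε) < f(π* − ε), where f(π) = σ₁²/π + σ₀²/(1-π). -/
/-
π* is the critical point of f: σ₁(1-π*) = σ₀π*. Going from π* - ε to π* + ε lowers σ₁²/π by
2εσ₁²/(π*² - ε²) and raises σ₀²/(1-π) by 2εσ₀²/((1-π*)² - ε²). By the critical point equation,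
comparing the two reduces to σ₁²ε² < σ₀²ε², i.e. to π* < 1 - π*.
-/

lemma div_sub_sub_div_add {x ε : ℝ} (c : ℝ) (hm : x - ε ≠ 0) (hp : x + ε ≠ 0) :
    c / (x - ε) - c / (x + ε) = 2 * ε * c / (x ^ 2 - ε ^ 2) := by
  have hsq : x ^ 2 - ε ^ 2 = (x - ε) * (x + ε) := by ring
  rw [hsq, div_sub_div _ _ hm hp]
  ring

lemma sq_div_add_sq_div_lt {a b p q ε : ℝ} (ha : a ≠ 0) (hcrit : a * q = b * p)
    (hε : 0 < ε) (hεp : ε < p) (hpq : p < q) :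
    a ^ 2 / (p + ε) + b ^ 2 / (q - ε) < a ^ 2 / (p - ε) + b ^ 2 / (q + ε) := by
  have hp : 0 < p := hε.trans hεp
  have hq : 0 < q := hp.trans hpq
  have hp2 : 0 < p ^ 2 - ε ^ 2 := by nlinarith
  have hq2 : 0 < q ^ 2 - ε ^ 2 := by nlinarith
  have hcrit2 : a ^ 2 * q ^ 2 = b ^ 2 * p ^ 2 := by rw [← mul_pow, hcrit, mul_pow]
  have hab : a ^ 2 < b ^ 2 := by
    have : a ^ 2 * p ^ 2 < b ^ 2 * p ^ 2 := hcrit2 ▸ by gcongr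
    exact lt_of_mul_lt_mul_right this (by positivity)
  have hgain : b ^ 2 / (q ^ 2 - ε ^ 2) < a ^ 2 / (p ^ 2 - ε ^ 2) := by
    rw [div_lt_div_iff₀ hq2 hp2]
    nlinarith [mul_lt_mul_of_pos_right hab (pow_pos hε 2)]
  have hA := div_sub_sub_div_add (a ^ 2) (by linarith : p - ε ≠ 0) (by linarith : p + ε ≠ 0)
  have hB := div_sub_sub_div_add (b ^ 2) (by linarith : q - ε ≠ 0) (by linarith : q + ε ≠ 0)
  rw [mul_div_assoc] at hA hB
  linarith [mul_lt_mul_of_pos_left hgain (by positivity : (0 : ℝ) < 2 * ε)]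

theorem neyman_loss_asymmetric_general
    (σ0 σ1 ε : ℝ)
    (hπ : σ1 / (σ0 + σ1) < 1/2)
    (hε : 0 < ε)
    (hεlow : ε < σ1 / (σ0 + σ1)) :
    σ1^2 / (σ1 / (σ0 + σ1) + ε) + σ0^2 / (1 - (σ1 / (σ0 + σ1) + ε))
      < σ1^2 / (σ1 / (σ0 + σ1) - ε) + σ0^2 / (1 - (σ1 / (σ0 + σ1) - ε)) := by
  set p := σ1 / (σ0 + σ1) with hp_def
  have hp : 0 < p := hε.trans hεlow
  have hs : σ0 + σ1 ≠ 0 := fun h => by simp [hp_def, h] at hp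
  have ha : σ1 ≠ 0 := fun h => by simp [hp_def, h] at hp
  have hcrit : σ1 * (1 - p) = σ0 * p := by
    rw [hp_def]
    field_simp
    ring
  have key := sq_div_add_sq_div_lt ha hcrit hε hεlow (by linarith)
  rwa [sub_add_eq_sub_sub, sub_sub_eq_add_sub, add_sub_right_comm]

theorem neyman_loss_asymmetric
    (σ0 σ1 ε : ℝ) (h0 : 0 < σ0) (h1 : 0 < σ1)
    (hπ : σ1 / (σ0 + σ1) < 1/2)
    (hε : 0 < ε)
    (hεlow : ε < σ1 / (σ0 + σ1))
    (hεhigh : ε ≤ 1/2 - σ1 / (σ0 + σ1)) :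
    σ1^2 / (σ1 / (σ0 + σ1) + ε) + σ0^2 / (1 - (σ1 / (σ0 + σ1) + ε))
      < σ1^2 / (σ1 / (σ0 + σ1) - ε) + σ0^2 / (1 - (σ1 / (σ0 + σ1) - ε)) :=
  neyman_loss_asymmetric_general σ0 σ1 ε hπ hε hεlow
end

section
/- For σ₀, σ₁ > 0, π* = σ₁/(σ₀+σ₁), and π ∈ (0,1) with π ≥ π*/2 and 1−π ≥ (1−π*)/2, the excess Neyman loss is bounded as σ₁²/π + σ₀²/(1−π) − (σ₀+σ₁)² ≤ 2(π−π*)²·(σ₀+σ₁)²·[1/π* + 1/(1−π*)]. -/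
theorem excess_neyman_loss_bound
    (σ0 σ1 π : ℝ) (h0 : 0 < σ0) (h1 : 0 < σ1) (hπ : π ∈ Set.Ioo (0:ℝ) 1)
    (hlow : π ≥ (σ1 / (σ0 + σ1)) / 2)
    (hhigh : 1 - π ≥ (1 - σ1 / (σ0 + σ1)) / 2) :
    σ1^2 / π + σ0^2 / (1 - π) - (σ0 + σ1)^2
      ≤ 2 * (π - σ1 / (σ0 + σ1))^2 * (σ0 + σ1)^2 *
          (1 / (σ1 / (σ0 + σ1)) + 1 / (1 - σ1 / (σ0 + σ1))) := by
  obtain ⟨hπ0, hπ1⟩ := hπ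
  have hs : (0:ℝ) < σ0 + σ1 := by linarith
  set p := σ1 / (σ0 + σ1) with hp
  have hp0 : 0 < p := div_pos h1 hs
  have hp1 : p < 1 := by rw [hp, div_lt_one hs]; linarith
  have h1π : 0 < 1 - π := by linarith
  have key : σ1^2 / π + σ0^2 / (1 - π) - (σ0 + σ1)^2
      = (π - p)^2 * (σ0 + σ1)^2 * (1/π + 1/(1-π)) := by
    rw [hp]
    field_simp
    ring
  rw [key]
  have b1 : (1:ℝ)/π ≤ 2/p := by
    rw [div_le_div_iff₀ hπ0 hp0]; linarith
  have b2 : (1:ℝ)/(1-π) ≤ 2/(1-p) :=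
    by rw [div_le_div_iff₀ h1π (by linarith : (0:ℝ) < 1 - p)]; linarith
  have hnn : 0 ≤ (π - p)^2 * (σ0 + σ1)^2 := by positivity
  calc (π - p)^2 * (σ0 + σ1)^2 * (1/π + 1/(1-π))
      ≤ (π - p)^2 * (σ0 + σ1)^2 * (2/p + 2/(1-p)) := by
        apply mul_le_mul_of_nonneg_left _ hnn
        linarith
    _ = 2 * (π - p)^2 * (σ0 + σ1)^2 * (1/p + 1/(1-p)) := by ring
end
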